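/- There exist permutations σ₁, σ₂, σ₃ of {1, …, 30} such that σ₁ ∘ σ₂ ∘ σ₃ = id, the subgroup generated by σ₁, σ₂, σ₃ acts transitively on {1, …, 30}, and the multisets of orbit sizes of the cyclic groups generated by σ₁, σ₂, σ₃ are, respectively, {12,8,4,1,1,1,1,1,1}, {6,6,5,5,5,3}, and {19,7,4}. -/

import Mathlib

/-!
The orbits of `⟨σ⟩` on which `σ` moves points are exactly the supports of the cycle factors of
`σ`, and the other orbits are singletons, so the multiset of orbit sizes is the cycle type of `σ`
padded with ones. The three permutations are given as products of disjoint cycles, which fixes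
their cycle types; their product is the identity, and a breadth-first search from `0` along the
three generators reaches every point in four steps.
-/

/-- The number of orbits of the cyclic group generated by a permutation `σ`
(i.e., the number of cycles of `σ`, counting fixed points as cycles of length 1). -/
noncomputable def cycleCount {α : Type*} [Finite α] (σ : Equiv.Perm α) : ℕ :=
  Nat.card (MulAction.orbitRel.Quotient (Subgroup.zpowers σ) α)

/-- The multiset of sizes of the orbits of the cyclic group generated by a permutation `σ`
(i.e., the cycle type of `σ`, with fixed points contributing parts equal to 1). -/
noncomputable def orbitSizes {α : Type*} [Finite α] (σ : Equiv.Perm α) : Multiset ℕ :=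
  letI := Fintype.ofFinite (MulAction.orbitRel.Quotient (Subgroup.zpowers σ) α)
  (Finset.univ : Finset (MulAction.orbitRel.Quotient (Subgroup.zpowers σ) α)).val.map
    fun q => Nat.card q.orbit

namespace MulAction.orbitRel.Quotient

variable {G α : Type*} [Group G] [MulAction G α]

theorem orbit_eq_orbit_out' (q : orbitRel.Quotient G α) : q.orbit = MulAction.orbit G q.out :=
  orbit_eq_orbit_out q Quotient.out_eq'

theorem out_mk_mem_orbit (x : α) :
    (Quotient.mk'' x : orbitRel.Quotient G α).out ∈ MulAction.orbit G x := by
  rw [← orbit_mk, mem_orbit, Quotient.out_eq']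

theorem eq_of_out_mem_orbit_out {q q' : orbitRel.Quotient G α}
    (h : q'.out ∈ MulAction.orbit G q.out) : q = q' := by
  rwa [← orbit_mk, mem_orbit, Quotient.out_eq', Quotient.out_eq', eq_comm] at h

end MulAction.orbitRel.Quotient

namespace Equiv.Perm

open MulAction.orbitRel.Quotient

variable {α : Type*}

theorem mem_orbit_zpowers_iff_sameCycle {σ : Perm α} {x y : α} :
    y ∈ MulAction.orbit (Subgroup.zpowers σ) x ↔ σ.SameCycle x y := by
  simp [MulAction.mem_orbit_iff, Subgroup.exists_zpowers, SameCycle, Subgroup.smul_def]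

theorem orbit_zpowers_eq_singleton {σ : Perm α} {x : α} (hx : σ x = x) :
    MulAction.orbit (Subgroup.zpowers σ) x = {x} := by
  ext y
  rw [mem_orbit_zpowers_iff_sameCycle, Set.mem_singleton_iff]
  exact ⟨fun h => (h.eq_of_left hx).symm, fun h => h ▸ SameCycle.refl _ _⟩

theorem sameCycle_out_mk (σ : Perm α) (x : α) :
    σ.SameCycle x (Quotient.mk'' x : MulAction.orbitRel.Quotient (Subgroup.zpowers σ) α).out :=
  mem_orbit_zpowers_iff_sameCycle.mp (out_mk_mem_orbit x)

theorem eq_of_sameCycle_out {σ : Perm α}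
    {q q' : MulAction.orbitRel.Quotient (Subgroup.zpowers σ) α}
    (h : σ.SameCycle q.out q'.out) : q = q' :=
  eq_of_out_mem_orbit_out (mem_orbit_zpowers_iff_sameCycle.mpr h)

variable [DecidableEq α]

def ofCycles (L : List (List α)) : Perm α := (L.map List.formPerm).prod

variable [Fintype α]

theorem orbit_zpowers_eq_support_cycleOf {σ : Perm α} {x : α} (hx : x ∈ σ.support) :
    MulAction.orbit (Subgroup.zpowers σ) x = (σ.cycleOf x).support := by
  ext y
  rw [mem_orbit_zpowers_iff_sameCycle, Finset.mem_coe, mem_support_cycleOf_iff]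
  exact (and_iff_left hx).symm

section OrbitSizes

variable (σ : Perm α) [Fintype (MulAction.orbitRel.Quotient (Subgroup.zpowers σ) α)]

theorem map_card_orbit_filter_mem_support :
    (Finset.univ.val.filter fun q : MulAction.orbitRel.Quotient (Subgroup.zpowers σ) α =>
      q.out ∈ σ.support).map (fun q => Nat.card q.orbit) = σ.cycleType := by
  rw [cycleType_def]
  refine Multiset.map_eq_map_of_bij_of_nodup _ _ (Finset.univ.nodup.filter _)
    σ.cycleFactorsFinset.nodup (fun q _ => σ.cycleOf q.out) ?_ ?_ ?_ ?_
  · intro q hq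
    exact cycleOf_mem_cycleFactorsFinset_iff.mpr (Multiset.mem_filter.mp hq).2
  · intro q hq q' _ h
    have hq' : q.out ∈ (σ.cycleOf q'.out).support :=
      h ▸ mem_support_cycleOf_iff.mpr ⟨SameCycle.refl _ _, (Multiset.mem_filter.mp hq).2⟩
    exact eq_of_sameCycle_out (mem_support_cycleOf_iff.mp hq').1.symm
  · intro c hc
    obtain ⟨a, ha⟩ := (mem_cycleFactorsFinset_iff.mp hc).1.nonempty_support
    refine ⟨Quotient.mk'' a, ?_, ?_⟩
    · have ha' : a ∈ σ.support := mem_cycleFactorsFinset_support_le hc ha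
      simpa using (sameCycle_out_mk σ a).mem_support_iff.mp ha'
    · rw [cycle_is_cycleOf ha hc]
      exact (sameCycle_out_mk σ a).symm.cycleOf_eq
  · intro q hq
    rw [orbit_eq_orbit_out', orbit_zpowers_eq_support_cycleOf (Multiset.mem_filter.mp hq).2,
      Nat.card_coe_set_eq, Set.ncard_coe_finset]
    rfl

theorem map_card_orbit_filter_notMem_support :
    (Finset.univ.val.filter fun q : MulAction.orbitRel.Quotient (Subgroup.zpowers σ) α =>
      q.out ∉ σ.support).map (fun q => Nat.card q.orbit) =
      Multiset.replicate (Fintype.card α - σ.support.card) 1 := by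
  have hone : ∀ q ∈ Finset.univ.val.filter fun q : MulAction.orbitRel.Quotient
      (Subgroup.zpowers σ) α => q.out ∉ σ.support, Nat.card q.orbit = 1 := fun q hq => by
    rw [orbit_eq_orbit_out',
      orbit_zpowers_eq_singleton (notMem_support.mp (Multiset.mem_filter.mp hq).2),
      Nat.card_unique]
  rw [Multiset.map_congr rfl hone, Multiset.map_const', ← Finset.card_compl]
  congr 1
  change (Finset.univ.filter fun q : MulAction.orbitRel.Quotient (Subgroup.zpowers σ) α =>
    q.out ∉ σ.support).card = _
  refine Finset.card_bij (fun q _ => q.out) (fun q hq => by simpa using hq)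
    (fun q _ q' _ h => eq_of_sameCycle_out (h ▸ SameCycle.refl _ _)) fun x hx => ?_
  have hx_out : x = (Quotient.mk'' x : MulAction.orbitRel.Quotient _ α).out :=
    (sameCycle_out_mk σ x).eq_of_left (notMem_support.mp (Finset.mem_compl.mp hx))
  exact ⟨Quotient.mk'' x, by simpa [← hx_out] using hx, hx_out.symm⟩

omit [Fintype (MulAction.orbitRel.Quotient (Subgroup.zpowers σ) α)] in
theorem orbitSizes_eq_parts_partition : orbitSizes σ = σ.partition.parts := by
  let _ := Fintype.ofFinite (MulAction.orbitRel.Quotient (Subgroup.zpowers σ) α)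
  rw [orbitSizes, parts_partition,
    ← Multiset.filter_add_not (p := fun q => q.out ∈ σ.support) Finset.univ.val,
    Multiset.map_add, map_card_orbit_filter_mem_support, map_card_orbit_filter_notMem_support]

end OrbitSizes

theorem cycleType_ofCycles {L : List (List α)} (hL : L.flatten.Nodup)
    (h2 : ∀ l ∈ L, 2 ≤ l.length) : (ofCycles L).cycleType = L.map List.length := by
  obtain ⟨hnd, hdisj⟩ := List.nodup_flatten.mp hL
  rw [ofCycles, cycleType_eq _ rfl]
  · rw [List.map_map]
    congr 1
    refine List.map_congr_left fun l hl => ?_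
    rw [Function.comp_apply, Function.comp_apply, List.support_formPerm_of_nodup l (hnd l hl),
      List.toFinset_card_of_nodup (hnd l hl)]
    rintro x rfl
    simpa using h2 _ hl
  · simpa using fun l hl => List.isCycle_formPerm (hnd l hl) (h2 l hl)
  · rw [List.pairwise_map]
    exact hdisj.imp_of_mem fun ha hb hab =>
      (List.formPerm_disjoint_iff (hnd _ ha) (hnd _ hb) (h2 _ ha) (h2 _ hb)).mpr hab

theorem orbitSizes_ofCycles {L : List (List α)} (hL : L.flatten.Nodup)
    (h2 : ∀ l ∈ L, 2 ≤ l.length) :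
    orbitSizes (ofCycles L) =
      (L.map List.length : Multiset ℕ) +
        Multiset.replicate (Fintype.card α - (L.map List.length).sum) 1 := by
  rw [orbitSizes_eq_parts_partition, parts_partition, ← sum_cycleType, cycleType_ofCycles hL h2,
    Multiset.sum_coe]

end Equiv.Perm

namespace MulAction

variable {G α : Type*} [Group G] [MulAction G α] [DecidableEq α]

def spread (gens : List G) (T : Finset α) : Finset α :=
  T ∪ T.biUnion fun x => (gens.map (· • x)).toFinset

theorem exists_mem_closure_smul_eq_of_mem_iterate_spread {s : Set G} {gens : List G}
    (hgens : ∀ g ∈ gens, g ∈ s) {x : α} :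
    ∀ (n : ℕ) {y : α},
      y ∈ (spread gens)^[n] {x} → ∃ g ∈ Subgroup.closure s, g • x = y
  | 0, y, hy => ⟨1, one_mem _, by simpa [eq_comm] using hy⟩
  | n + 1, y, hy => by
    rw [Function.iterate_succ_apply', spread, Finset.mem_union, Finset.mem_biUnion] at hy
    rcases hy with hy | ⟨z, hz, hyz⟩
    · exact exists_mem_closure_smul_eq_of_mem_iterate_spread hgens n hy
    · obtain ⟨g, hg, rfl⟩ := exists_mem_closure_smul_eq_of_mem_iterate_spread hgens n hz
      obtain ⟨h, hh, rfl⟩ : ∃ h ∈ gens, h • g • x = y := by simpa using hyz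
      exact ⟨h * g, mul_mem (Subgroup.subset_closure (hgens h hh)) hg, mul_smul h g x⟩

theorem exists_mem_closure_smul_eq_of_iterate_spread_eq_univ [Fintype α] {s : Set G}
    {gens : List G} (hgens : ∀ g ∈ gens, g ∈ s) {x₀ : α} {n : ℕ}
    (hn : (spread gens)^[n] {x₀} = Finset.univ) (x y : α) :
    ∃ g ∈ Subgroup.closure s, g • x = y := by
  obtain ⟨gx, hgx, rfl⟩ :=
    exists_mem_closure_smul_eq_of_mem_iterate_spread hgens n (hn ▸ Finset.mem_univ x)
  obtain ⟨gy, hgy, rfl⟩ :=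
    exists_mem_closure_smul_eq_of_mem_iterate_spread hgens n (hn ▸ Finset.mem_univ y)
  exact ⟨gy * gx⁻¹, mul_mem hgy (inv_mem hgx), by rw [mul_smul, inv_smul_smul]⟩

end MulAction

open Equiv.Perm

def monodromy₁ : Equiv.Perm (Fin 30) :=
  ofCycles [[0,1,2,3,4,5,6,7,8,9,10,11], [12,13,14,15,16,17,18,19], [20,21,22,23]]

def monodromy₂ : Equiv.Perm (Fin 30) :=
  ofCycles [[12,6,16,10,27,14], [0,3,17,24,29,22], [26,19,4,28,9], [23,2,25,8,21],
    [11,20,15,7,13], [5,1,18]]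

def monodromy₃ : Equiv.Perm (Fin 30) :=
  ofCycles [[0,13,14,7,12,26,9,25,2,5,19,1,22,8,15,27,10,28,4], [3,23,29,24,17,6,18],
    [11,16,20,21]]

set_option maxRecDepth 4000 in
theorem monodromy_mul_mul_eq_one : monodromy₁ * monodromy₂ * monodromy₃ = 1 := by
  decide

set_option maxRecDepth 4000 in
theorem iterate_spread_monodromy_eq_univ :
    (MulAction.spread [monodromy₁, monodromy₂, monodromy₃])^[4] {(0 : Fin 30)} =
      Finset.univ := by
  decide

/-- Realizability of the degree-30 branch-data triple
`[12, 8, 4, 1, 1, 1, 1, 1, 1]`, `[6, 6, 5, 5, 5, 3]`, `[19, 7, 4]`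
by a transitive permutation triple with product the identity. -/
theorem realizable_triple_13 :
    ∃ σ₁ σ₂ σ₃ : Equiv.Perm (Fin 30),
      σ₁ * σ₂ * σ₃ = 1 ∧
      (∀ x y : Fin 30,
        ∃ g ∈ Subgroup.closure ({σ₁, σ₂, σ₃} : Set (Equiv.Perm (Fin 30))), g x = y) ∧
      orbitSizes σ₁ = ({12, 8, 4, 1, 1, 1, 1, 1, 1} : Multiset ℕ) ∧
      orbitSizes σ₂ = ({6, 6, 5, 5, 5, 3} : Multiset ℕ) ∧
      orbitSizes σ₃ = ({19, 7, 4} : Multiset ℕ) := by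
  refine ⟨monodromy₁, monodromy₂, monodromy₃, monodromy_mul_mul_eq_one,
    MulAction.exists_mem_closure_smul_eq_of_iterate_spread_eq_univ (by simp)
      iterate_spread_monodromy_eq_univ, ?_, ?_, ?_⟩ <;>
  exact (orbitSizes_ofCycles (by decide) (by decide)).trans (by decide)
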